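/- arXiv:2111.09949 — 10 statements merged into one kernel-verified Lean document; each statement's English description precedes it below -/
import Mathlib

section
/- Let A ∈ ℤ^{n×n} be nonsingular with Smith form S = diag(s_1,…,s_n), and let M ∈ ℤ^{n×n} be a Smith massager for A. Fix indices 1 ≤ i₁ < i₂ ≤ n and an integer c. Then the matrix obtained from M by adding c times column i₂ of M to column i₁ of M is also a Smith massager for A. -/
/-! The column operation is right multiplication by the transvection `E = 1 + c • eᵢ₂ᵢ₁`.
Right multiplication by any `E` with `s_j ∣ s_k E_kj` for all `k, j` respects congruence
modulo `S` column by column; when `i₁ ≤ i₂` this holds for the transvection because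
`s_i₁ ∣ s_i₂`. Hence `A M E ≡ 0`, and `W' = E⁻¹ W` satisfies `W' M E ≡ E⁻¹ E = I`, as left
multiplication also respects the congruence. -/

open Matrix

/-- A square integer matrix is unimodular if its determinant is `±1`. -/
def IsUnimodular {ι : Type*} [Fintype ι] [DecidableEq ι] (U : Matrix ι ι ℤ) : Prop :=
  U.det = 1 ∨ U.det = -1

/-- `S` is a Smith form of `A`: it is diagonal with positive diagonal entries
forming a divisibility chain, and `P * A * Q = S` for some unimodular `P`, `Q`. -/
def IsSmithForm {n : ℕ} (A S : Matrix (Fin n) (Fin n) ℤ) : Prop :=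
  (∀ i j : Fin n, i ≠ j → S i j = 0) ∧ (∀ i, 0 < S i i) ∧
  (∀ i j : Fin n, i ≤ j → S i i ∣ S j j) ∧
  ∃ P Q : Matrix (Fin n) (Fin n) ℤ, IsUnimodular P ∧ IsUnimodular Q ∧ P * A * Q = S

/-- `B ≡ C (colmod S)`: column `j` of `B` is congruent to column `j` of `C`
modulo the `j`-th diagonal entry of `S`. -/
def ColMod {ι : Type*} [Fintype ι] (S B C : Matrix ι ι ℤ) : Prop :=
  ∀ i j, S j j ∣ (B i j - C i j)

/-- `M` is a Smith massager for `A` (with Smith form `S`):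
`A * M ≡ 0 (colmod S)` and `W * M ≡ I (colmod S)` for some integer matrix `W`. -/
def IsSmithMassager {ι : Type*} [Fintype ι] [DecidableEq ι] (A S M : Matrix ι ι ℤ) : Prop :=
  ColMod S (A * M) 0 ∧ ∃ W : Matrix ι ι ℤ, ColMod S (W * M) 1

def ColModCompatible {ι : Type*} (S E : Matrix ι ι ℤ) : Prop :=
  ∀ k j, S j j ∣ S k k * E k j

namespace ColMod

variable {ι : Type*} [Fintype ι] {S B C : Matrix ι ι ℤ}

theorem mul_left (h : ColMod S B C) (X : Matrix ι ι ℤ) : ColMod S (X * B) (X * C) := by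
  intro i j
  rw [← Matrix.sub_apply, ← Matrix.mul_sub, mul_apply]
  exact Finset.dvd_sum fun k _ => (h k j).mul_left _

theorem mul_right (h : ColMod S B C) {E : Matrix ι ι ℤ} (hE : ColModCompatible S E) :
    ColMod S (B * E) (C * E) := by
  intro i j
  rw [← Matrix.sub_apply, ← Matrix.sub_mul, mul_apply]
  exact Finset.dvd_sum fun k _ => (hE k j).trans (mul_dvd_mul_right (h i k) _)

end ColMod

theorem colModCompatible_transvection {ι : Type*} [DecidableEq ι] {S : Matrix ι ι ℤ}
    {i j : ι} (h : S j j ∣ S i i) (c : ℤ) : ColModCompatible S (transvection i j c) := by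
  intro k l
  by_cases hkl : k = l
  · subst hkl
    exact dvd_mul_right _ _
  · rw [transvection, Matrix.add_apply, one_apply_ne hkl, zero_add, single_apply]
    split_ifs with hij
    · obtain ⟨rfl, rfl⟩ := hij
      exact h.mul_right c
    · rw [mul_zero]
      exact dvd_zero _

theorem IsSmithMassager.mul_right {ι : Type*} [Fintype ι] [DecidableEq ι]
    {A S M E E' : Matrix ι ι ℤ} (hM : IsSmithMassager A S M) (hE : ColModCompatible S E)
    (hE' : E' * E = 1) : IsSmithMassager A S (M * E) := by
  obtain ⟨hAM, W, hWM⟩ := hM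
  refine ⟨?_, E' * W, ?_⟩
  · simpa [← Matrix.mul_assoc] using hAM.mul_right hE
  · simpa [Matrix.mul_assoc, hE'] using (hWM.mul_right hE).mul_left E'

theorem smithMassager_add_multiple_of_latter_col_general {n : ℕ}
    (A S M : Matrix (Fin n) (Fin n) ℤ)
    (hS : IsSmithForm A S) (hM : IsSmithMassager A S M)
    (i₁ i₂ : Fin n) (h12 : i₁ < i₂) (c : ℤ) :
    IsSmithMassager A S
      (Matrix.of fun r j => if j = i₁ then M r i₁ + c * M r i₂ else M r j) := by
  have hcol : (Matrix.of fun r j => if j = i₁ then M r i₁ + c * M r i₂ else M r j) =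
      M * transvection i₂ i₁ c := by
    ext r j
    by_cases hj : j = i₁
    · subst hj
      simp
    · simp [hj]
  have hinv : transvection i₂ i₁ (-c) * transvection i₂ i₁ c = 1 := by
    rw [transvection_mul_transvection_same _ _ h12.ne', neg_add_cancel, transvection_zero]
  obtain ⟨-, -, hdvd, -⟩ := hS
  rw [hcol]
  exact hM.mul_right (colModCompatible_transvection (hdvd i₁ i₂ h12.le) c) hinv

/-- Adding `c` times a latter column `i₂` to a former column `i₁` of a Smith
massager `M` for `A` yields another Smith massager for `A`. -/
theorem smithMassager_add_multiple_of_latter_col {n : ℕ}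
    (A S M : Matrix (Fin n) (Fin n) ℤ) (hA : A.det ≠ 0)
    (hS : IsSmithForm A S) (hM : IsSmithMassager A S M)
    (i₁ i₂ : Fin n) (h12 : i₁ < i₂) (c : ℤ) :
    IsSmithMassager A S
      (Matrix.of fun r j => if j = i₁ then M r i₁ + c * M r i₂ else M r j) :=
  smithMassager_add_multiple_of_latter_col_general A S M hS hM i₁ i₂ h12 c
end

section
/- Let A ∈ ℤ^{n×n} be nonsingular with Smith form S = diag(s_1,…,s_n), and let M ∈ ℤ^{n×n} be a Smith massager for A. Then for every row vector v ∈ ℤ^{1×n}, the vector v A^{-1} ∈ ℚ^{1×n} has all integer entries if and only if the vector v M S^{-1} ∈ ℚ^{1×n} has all integer entries. -/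
/-!
Write `P * A * Q = S = diagonal d`. Over `ℚ`, `A⁻¹ = Q * S⁻¹ * P` with `P` unimodular, so
`v A⁻¹` is integral iff `(v Q) S⁻¹` is, i.e. iff `v Q` lies in the lattice
`L = {y | d j ∣ y j}`; likewise `v M S⁻¹` is integral iff `v M ∈ L`. Put `T = Q⁻¹ M`, so that
`v M = (v Q) T`. The map `y ↦ y T` sends `L` into `L`, since `S Q⁻¹ M = P A M ≡ 0`, and is onto
modulo `L`, since `(y W Q) T = y W M ≡ y`. Hence it induces a surjective, so bijective,
endomorphism of the finite group `ℤⁿ ⧸ L`, and `v Q ∈ L ↔ v M ∈ L`.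
-/

open Matrix

/-- A rational vector has all integer entries. -/
def IsIntVec {n : ℕ} (x : Fin n → ℚ) : Prop := ∀ j, ∃ z : ℤ, x j = z

theorem AddSubgroup.mem_of_map_mem_of_surjective_mod {G : Type*} [AddCommGroup G]
    {L : AddSubgroup G} [L.FiniteIndex] (f : G →+ G) (hf : L ≤ L.comap f)
    (hsurj : ∀ y, ∃ x, f x - y ∈ L) {x : G} (hx : f x ∈ L) : x ∈ L := by
  set F := QuotientAddGroup.map L L f hf
  have hF : Function.Surjective F := by
    rintro ⟨y⟩
    obtain ⟨x, hxy⟩ := hsurj y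
    exact ⟨x, QuotientAddGroup.eq_iff_sub_mem.2 hxy⟩
  rw [← QuotientAddGroup.eq_zero_iff]
  apply Finite.injective_iff_surjective.2 hF
  simpa [F] using hx

section MultiplesLattice

variable {ι : Type*}

def multiplesLattice (d : ι → ℤ) : AddSubgroup (ι → ℤ) :=
  AddSubgroup.pi Set.univ fun j => AddSubgroup.zmultiples (d j)

theorem mem_multiplesLattice {d y : ι → ℤ} : y ∈ multiplesLattice d ↔ ∀ j, d j ∣ y j := by
  simp [multiplesLattice, AddSubgroup.mem_pi, Int.mem_zmultiples_iff]

variable [Fintype ι]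

theorem multiplesLattice_finiteIndex {d : ι → ℤ} (hd : ∀ j, d j ≠ 0) :
    (multiplesLattice d).FiniteIndex := by
  rw [AddSubgroup.finiteIndex_iff, multiplesLattice, AddSubgroup.index_pi]
  simp [Finset.prod_ne_zero_iff, hd]

theorem vecMul_mem_of_forall_row_mem {κ : Type*} {L : AddSubgroup (κ → ℤ)} {B : Matrix ι κ ℤ}
    (hB : ∀ i, B i ∈ L) (x : ι → ℤ) : x ᵥ* B ∈ L := by
  rw [vecMul_eq_sum]
  exact L.sum_mem fun i _ => L.zsmul_mem (hB i) (x i)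

theorem colMod_iff_forall_sub_mem_multiplesLattice {S B C : Matrix ι ι ℤ} :
    ColMod S B C ↔ ∀ i, (B - C) i ∈ multiplesLattice S.diag := by
  simp [ColMod, mem_multiplesLattice]

variable [DecidableEq ι]

theorem mem_multiplesLattice_iff_exists_vecMul_diagonal {d y : ι → ℤ} :
    y ∈ multiplesLattice d ↔ ∃ c, y = c ᵥ* diagonal d := by
  simp only [mem_multiplesLattice, funext_iff, vecMul_diagonal]
  constructor
  · intro h
    choose c hc using h
    exact ⟨c, fun j => by rw [hc j, mul_comm]⟩
  · rintro ⟨c, hc⟩ j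
    rw [hc j]
    exact dvd_mul_left _ _

end MultiplesLattice

theorem IsSmithMassager.vecMul_mem_multiplesLattice_iff {ι : Type*} [Fintype ι] [DecidableEq ι]
    {A M P Q : Matrix ι ι ℤ} {d : ι → ℤ} (hM : IsSmithMassager A (diagonal d) M)
    (hd : ∀ i, d i ≠ 0) (hQ : IsUnit Q) (hPAQ : P * A * Q = diagonal d) (v : ι → ℤ) :
    v ᵥ* Q ∈ multiplesLattice d ↔ v ᵥ* M ∈ multiplesLattice d := by
  obtain ⟨hAM, W, hWM⟩ := hM
  simp only [colMod_iff_forall_sub_mem_multiplesLattice, diag_diagonal] at hAM hWM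
  obtain ⟨Q', hQQ'⟩ := hQ.exists_right_inv
  have := multiplesLattice_finiteIndex hd
  let f : (ι → ℤ) →+ (ι → ℤ) := (Q' * M).vecMulLinear.toAddMonoidHom
  have hf : ∀ y, f y = y ᵥ* (Q' * M) := fun _ => rfl
  have hfQ : f (v ᵥ* Q) = v ᵥ* M := by
    rw [hf, vecMul_vecMul, ← Matrix.mul_assoc, hQQ', Matrix.one_mul]
  have hL : multiplesLattice d ≤ (multiplesLattice d).comap f := by
    intro y hy
    obtain ⟨c, rfl⟩ := mem_multiplesLattice_iff_exists_vecMul_diagonal.1 hy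
    have hSQ' : diagonal d * (Q' * M) = P * (A * M) := by
      rw [← hPAQ, Matrix.mul_assoc, Matrix.mul_assoc, ← Matrix.mul_assoc Q, hQQ', Matrix.one_mul]
    rw [AddSubgroup.mem_comap, hf, vecMul_vecMul, hSQ', ← vecMul_vecMul]
    exact vecMul_mem_of_forall_row_mem (fun i => by simpa using hAM i) _
  have hsurj : ∀ y, ∃ x, f x - y ∈ multiplesLattice d := fun y => by
    refine ⟨y ᵥ* (W * Q), ?_⟩
    rw [hf, vecMul_vecMul, Matrix.mul_assoc, ← Matrix.mul_assoc Q, hQQ', Matrix.one_mul]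
    nth_rw 2 [← vecMul_one y]
    rw [← vecMul_sub]
    exact vecMul_mem_of_forall_row_mem hWM y
  rw [← hfQ]
  exact ⟨fun h => hL h, AddSubgroup.mem_of_map_mem_of_surjective_mod f hL hsurj⟩

theorem Matrix.inv_eq_mul_inv_mul_of_mul_mul_eq {ι R : Type*} [Fintype ι] [DecidableEq ι]
    [CommRing R] {A P Q S : Matrix ι ι R} (hP : IsUnit P) (hQ : IsUnit Q) (h : P * A * Q = S) :
    A⁻¹ = Q * S⁻¹ * P := by
  rw [← h, mul_inv_rev, mul_inv_rev, ← Matrix.mul_assoc, ← Matrix.mul_assoc,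
    mul_nonsing_inv Q ((isUnit_iff_isUnit_det Q).1 hQ), Matrix.one_mul, Matrix.mul_assoc,
    nonsing_inv_mul P ((isUnit_iff_isUnit_det P).1 hP), Matrix.mul_one]

theorem IsUnimodular.isUnit {ι : Type*} [Fintype ι] [DecidableEq ι] {U : Matrix ι ι ℤ}
    (hU : IsUnimodular U) : IsUnit U := by
  rw [isUnit_iff_isUnit_det]
  rcases hU with h | h <;> simp [h]

section IntCast

variable {ι R : Type*} [Fintype ι] [Ring R]

theorem Matrix.map_intCast_mul (A B : Matrix ι ι ℤ) :
    (A * B).map (Int.cast : ℤ → R) = A.map Int.cast * B.map Int.cast :=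
  Matrix.map_mul (f := Int.castRingHom R)

theorem intCast_vecMul_map {m : Type*} (u : ι → ℤ) (B : Matrix ι m ℤ) :
    (fun i => (u i : R)) ᵥ* B.map Int.cast = fun j => ((u ᵥ* B) j : R) := by
  ext j
  exact ((Int.castRingHom R).map_vecMul B u j).symm

theorem IsUnit.map_intCast [DecidableEq ι] {U : Matrix ι ι ℤ} (hU : IsUnit U) :
    IsUnit (U.map (Int.cast : ℤ → R)) :=
  hU.map (Int.castRingHom R).mapMatrix

end IntCast

section IsIntVec

variable {n : ℕ}

theorem isIntVec_iff_exists_eq_intCast {x : Fin n → ℚ} :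
    IsIntVec x ↔ ∃ u : Fin n → ℤ, x = fun i => (u i : ℚ) := by
  simp only [IsIntVec, funext_iff]
  exact ⟨fun h => ⟨fun j => (h j).choose, fun j => (h j).choose_spec⟩,
    fun ⟨u, hu⟩ j => ⟨u j, hu j⟩⟩

theorem IsIntVec.vecMul_map {m : ℕ} {x : Fin n → ℚ} (hx : IsIntVec x)
    (B : Matrix (Fin n) (Fin m) ℤ) :
    IsIntVec (x ᵥ* B.map Int.cast) := by
  obtain ⟨u, rfl⟩ := isIntVec_iff_exists_eq_intCast.1 hx
  rw [intCast_vecMul_map]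
  exact fun j => ⟨_, rfl⟩

theorem isIntVec_vecMul_map_iff {U : Matrix (Fin n) (Fin n) ℤ} (hU : IsUnit U) (x : Fin n → ℚ) :
    IsIntVec (x ᵥ* U.map Int.cast) ↔ IsIntVec x := by
  refine ⟨fun h => ?_, fun h => h.vecMul_map U⟩
  obtain ⟨V, hUV⟩ := hU.exists_right_inv
  have hx : x = x ᵥ* U.map Int.cast ᵥ* V.map Int.cast := by
    rw [vecMul_vecMul, ← Matrix.map_intCast_mul, hUV, Matrix.map_one _ Int.cast_zero Int.cast_one,
      vecMul_one]
  rw [hx]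
  exact h.vecMul_map V

theorem isIntVec_intCast_vecMul_inv_diagonal_iff {d : Fin n → ℤ} (hd : ∀ j, d j ≠ 0)
    (u : Fin n → ℤ) :
    IsIntVec ((fun i => (u i : ℚ)) ᵥ* ((diagonal d).map (Int.cast : ℤ → ℚ))⁻¹) ↔
      u ∈ multiplesLattice d := by
  have hdℚ : ∀ j, (d j : ℚ) ≠ 0 := fun j => Int.cast_ne_zero.2 (hd j)
  have hinv : ((diagonal d).map (Int.cast : ℤ → ℚ))⁻¹ = diagonal fun j => (d j : ℚ)⁻¹ := by
    rw [diagonal_map Int.cast_zero]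
    exact inv_eq_right_inv (by simp [diagonal_mul_diagonal, hdℚ])
  rw [hinv, mem_multiplesLattice]
  refine forall_congr' fun j => ?_
  simp only [vecMul_diagonal, ← div_eq_mul_inv, div_eq_iff (hdℚ j), dvd_iff_exists_eq_mul_left]
  exact exists_congr fun z => by norm_cast

end IsIntVec

theorem vecMul_inv_integral_iff_vecMul_massager_integral_general {n : ℕ}
    (A S M : Matrix (Fin n) (Fin n) ℤ)
    (hS : IsSmithForm A S) (hM : IsSmithMassager A S M)
    (v : Fin n → ℤ) :
    IsIntVec (Matrix.vecMul (fun i => (v i : ℚ)) (A.map (Int.cast : ℤ → ℚ))⁻¹) ↔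
    IsIntVec (Matrix.vecMul (fun i => (v i : ℚ))
      (M.map (Int.cast : ℤ → ℚ) * (S.map (Int.cast : ℤ → ℚ))⁻¹)) := by
  obtain ⟨hdiag, hpos, -, P, Q, hP, hQ, hPAQ⟩ := hS
  obtain ⟨d, rfl⟩ : ∃ d, S = diagonal d :=
    ⟨S.diag, ((isDiag_iff_diagonal_diag S).1 hdiag).symm⟩
  have hd : ∀ i, d i ≠ 0 := fun i => by simpa using (hpos i).ne'
  have hPAQℚ : P.map Int.cast * A.map Int.cast * Q.map Int.cast =
      (diagonal d).map (Int.cast : ℤ → ℚ) := by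
    rw [← Matrix.map_intCast_mul, ← Matrix.map_intCast_mul, hPAQ]
  rw [Matrix.inv_eq_mul_inv_mul_of_mul_mul_eq hP.isUnit.map_intCast hQ.isUnit.map_intCast hPAQℚ,
    ← vecMul_vecMul, isIntVec_vecMul_map_iff hP.isUnit, ← vecMul_vecMul, intCast_vecMul_map,
    isIntVec_intCast_vecMul_inv_diagonal_iff hd, ← vecMul_vecMul, intCast_vecMul_map,
    isIntVec_intCast_vecMul_inv_diagonal_iff hd]
  exact hM.vecMul_mem_multiplesLattice_iff hd hQ.isUnit hPAQ v

/-- For a Smith massager `M` of `A`, a row vector `v A⁻¹` is integral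
iff `v M S⁻¹` is integral. -/
theorem vecMul_inv_integral_iff_vecMul_massager_integral {n : ℕ}
    (A S M : Matrix (Fin n) (Fin n) ℤ) (hA : A.det ≠ 0)
    (hS : IsSmithForm A S) (hM : IsSmithMassager A S M)
    (v : Fin n → ℤ) :
    IsIntVec (Matrix.vecMul (fun i => (v i : ℚ)) (A.map (Int.cast : ℤ → ℚ))⁻¹) ↔
    IsIntVec (Matrix.vecMul (fun i => (v i : ℚ))
      (M.map (Int.cast : ℤ → ℚ) * (S.map (Int.cast : ℤ → ℚ))⁻¹)) :=
  vecMul_inv_integral_iff_vecMul_massager_integral_general A S M hS hM v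
end

section
/- Let A ∈ ℤ^{n×n} be nonsingular with Smith form S = diag(s_1,…,s_n), and let M ∈ ℤ^{n×n} be a Smith massager for A. Then the set { v A : v ∈ ℤ^{1×n} } of all integer linear combinations of the rows of A is equal to the set { w ∈ ℤ^{1×n} : for each j, s_j divides every entry of the j-th column contribution, i.e. (wM)_j ≡ 0 (mod s_j) for all j = 1,…,n }. -/
open Matrix

/-! Both sides are kernels of surjections `ℤⁿ → ∏ⱼ ℤ/sⱼ`: the row lattice of `A` is the kernel of
`x ↦ x Q mod S`, because `P A Q = S` carries it onto the row lattice of the diagonal matrix `S`,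
and the massager kernel is that of `x ↦ x M mod S`, which is onto because `W M ≡ I`.
Since `A M ≡ 0`, the first kernel lies in the second; having the same finite index, they agree. -/

@[to_additive]
theorem MonoidHom.ker_eq_of_le_of_surjective {G H : Type*} [Group G] [Group H] [Finite H]
    {f g : G →* H} (hf : Function.Surjective f) (hg : Function.Surjective g)
    (hle : f.ker ≤ g.ker) : f.ker = g.ker := by
  have index_ker_of_surjective (φ : G →* H) (hφ : Function.Surjective φ) :
      φ.ker.index = Nat.card H := by
    rw [Subgroup.index_ker, MonoidHom.range_eq_top.mpr hφ, Subgroup.card_top]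
  refine hle.eq_of_not_lt fun hlt => ?_
  have := Subgroup.index_strictAnti hlt
  rw [index_ker_of_surjective f hf, index_ker_of_surjective g hg] at this
  exact this.false

theorem IsUnimodular.isUnit_det {ι : Type*} [Fintype ι] [DecidableEq ι] {U : Matrix ι ι ℤ}
    (hU : IsUnimodular U) : IsUnit U.det := by
  rcases hU with h | h <;> simp [h]

namespace Matrix

variable {ι : Type*} [Fintype ι]

theorem exists_vecMul_diagonal_eq_iff [DecidableEq ι] (d y : ι → ℤ) :
    (∃ u, y = u ᵥ* diagonal d) ↔ ∀ j, d j ∣ y j := by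
  simp only [funext_iff, vecMul_diagonal]
  refine ⟨fun ⟨u, hu⟩ j => hu j ▸ dvd_mul_left _ _, fun h => ⟨fun j => y j / d j, fun j => ?_⟩⟩
  exact (Int.ediv_mul_cancel (h j)).symm

theorem exists_vecMul_eq_iff_of_isUnit_det [DecidableEq ι] {A P Q : Matrix ι ι ℤ}
    (hP : IsUnit P.det) (hQ : IsUnit Q.det) (x : ι → ℤ) :
    (∃ v, x = v ᵥ* A) ↔ ∃ u, x ᵥ* Q = u ᵥ* (P * A * Q) := by
  constructor
  · rintro ⟨v, rfl⟩
    refine ⟨v ᵥ* P⁻¹, ?_⟩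
    rw [vecMul_vecMul, vecMul_vecMul, Matrix.mul_assoc P, nonsing_inv_mul_cancel_left _ _ hP]
  · rintro ⟨u, hu⟩
    refine ⟨u ᵥ* P, vecMul_injective_of_isUnit ((isUnit_iff_isUnit_det Q).mpr hQ) ?_⟩
    simp only [hu, vecMul_vecMul, Matrix.mul_assoc]

theorem exists_vecMul_eq_iff_dvd_vecMul [DecidableEq ι] {A S P Q : Matrix ι ι ℤ}
    (hP : IsUnit P.det) (hQ : IsUnit Q.det) (hS : S.IsDiag) (hPAQ : P * A * Q = S)
    (x : ι → ℤ) : (∃ v, x = v ᵥ* A) ↔ ∀ j, S j j ∣ (x ᵥ* Q) j := by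
  rw [exists_vecMul_eq_iff_of_isUnit_det hP hQ, hPAQ]
  simpa only [hS.diagonal_diag, diag_apply] using exists_vecMul_diagonal_eq_iff S.diag (x ᵥ* Q)

/-- The modulus is `(S j j).natAbs` so that the map makes sense without a sign hypothesis. -/
def vecMulMod (S M : Matrix ι ι ℤ) : (ι → ℤ) →+ ((j : ι) → ZMod (S j j).natAbs) :=
  AddMonoidHom.mk' (fun x j => ((x ᵥ* M) j : ZMod _)) fun x y => by
    ext j
    simp [add_vecMul]

variable {S M : Matrix ι ι ℤ}

@[simp]
theorem vecMulMod_apply (x : ι → ℤ) (j : ι) :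
    vecMulMod S M x j = ((x ᵥ* M) j : ZMod (S j j).natAbs) :=
  rfl

theorem mem_ker_vecMulMod {x : ι → ℤ} : x ∈ (vecMulMod S M).ker ↔ ∀ j, S j j ∣ (x ᵥ* M) j := by
  simp only [AddMonoidHom.mem_ker, funext_iff, vecMulMod_apply, Pi.zero_apply,
    ZMod.intCast_zmod_eq_zero_iff_dvd, Int.natAbs_dvd]

theorem vecMulMod_vecMul (W : Matrix ι ι ℤ) (y : ι → ℤ) :
    vecMulMod S M (y ᵥ* W) = vecMulMod S (W * M) y := by
  ext j
  simp [vecMul_vecMul]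

theorem _root_.ColMod.vecMulMod_eq {B C : Matrix ι ι ℤ} (h : ColMod S B C) :
    vecMulMod S B = vecMulMod S C := by
  ext x j
  rw [vecMulMod_apply, vecMulMod_apply, ZMod.intCast_eq_intCast_iff_dvd_sub, Int.natAbs_dvd,
    ← Pi.sub_apply, ← vecMul_sub]
  exact Finset.dvd_sum fun i _ => dvd_mul_of_dvd_right (dvd_neg.mp (by simpa using h i j)) _

theorem vecMulMod_one [DecidableEq ι] (y : ι → ℤ) :
    vecMulMod S 1 y = fun j => (y j : ZMod (S j j).natAbs) := by
  ext j
  simp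

theorem vecMul_mem_ker_vecMulMod {A : Matrix ι ι ℤ} (h : ColMod S (A * M) 0) (v : ι → ℤ) :
    v ᵥ* A ∈ (vecMulMod S M).ker := by
  rw [AddMonoidHom.mem_ker, vecMulMod_vecMul, h.vecMulMod_eq]
  ext j
  simp

theorem vecMulMod_surjective [DecidableEq ι] {W : Matrix ι ι ℤ} (h : ColMod S (W * M) 1) :
    Function.Surjective (vecMulMod S M) := fun a => by
  refine ⟨(fun j => ((a j).cast : ℤ)) ᵥ* W, ?_⟩
  rw [vecMulMod_vecMul, h.vecMulMod_eq, vecMulMod_one]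
  exact funext fun j => ZMod.intCast_zmod_cast (a j)

end Matrix

theorem rowSpace_eq_massager_kernel_general {n : ℕ}
    (A S M : Matrix (Fin n) (Fin n) ℤ)
    (hS : IsSmithForm A S) (hM : IsSmithMassager A S M) :
    {x : Fin n → ℤ | ∃ v : Fin n → ℤ, x = Matrix.vecMul v A} =
    {w : Fin n → ℤ | ∀ j : Fin n, S j j ∣ Matrix.vecMul w M j} := by
  obtain ⟨hdiag, hpos, -, P, Q, hP, hQ, hPAQ⟩ := hS
  obtain ⟨hAM, W, hWM⟩ := hM
  have : ∀ j, NeZero (S j j).natAbs := fun j => ⟨Int.natAbs_ne_zero.mpr (hpos j).ne'⟩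
  have hrow (x : Fin n → ℤ) : (∃ v, x = v ᵥ* A) ↔ x ∈ (vecMulMod S Q).ker := by
    rw [mem_ker_vecMulMod]
    exact exists_vecMul_eq_iff_dvd_vecMul hP.isUnit_det hQ.isUnit_det hdiag hPAQ x
  have hQsurj : Function.Surjective (vecMulMod S Q) :=
    vecMulMod_surjective (W := Q⁻¹) (by simp [nonsing_inv_mul _ hQ.isUnit_det, ColMod])
  have hle : (vecMulMod S Q).ker ≤ (vecMulMod S M).ker := fun x hx => by
    obtain ⟨v, rfl⟩ := (hrow x).mpr hx
    exact vecMul_mem_ker_vecMulMod hAM v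
  have hker := AddMonoidHom.ker_eq_of_le_of_surjective hQsurj (vecMulMod_surjective hWM) hle
  ext x
  simp only [Set.mem_ofPred_eq, hrow, hker, mem_ker_vecMulMod]

/-- The lattice of integer linear combinations of the rows of `A` equals the set of
integer row vectors `w` with `(w M)_j ≡ 0 (mod s_j)` for all `j`. -/
theorem rowSpace_eq_massager_kernel {n : ℕ}
    (A S M : Matrix (Fin n) (Fin n) ℤ) (hA : A.det ≠ 0)
    (hS : IsSmithForm A S) (hM : IsSmithMassager A S M) :
    {x : Fin n → ℤ | ∃ v : Fin n → ℤ, x = Matrix.vecMul v A} =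
    {w : Fin n → ℤ | ∀ j : Fin n, S j j ∣ Matrix.vecMul w M j} :=
  rowSpace_eq_massager_kernel_general A S M hS hM
end

section
/- Let c be a positive integer and let A ∈ ℤ^{n×n} be nonsingular with Smith form S = diag(s_1,…,s_n), so that cS is the Smith form of cA. If M ∈ ℤ^{n×n} is a Smith massager for cA, then for every matrix R ∈ ℤ^{n×n}, the matrix M + R·(cS) is a Smith massager for A. -/
/-! Dividing the congruences for `c • A` modulo `c • S` by `c` shows that `M` is already a Smith
massager for `A`, and since `S` is diagonal, `R * (c • S) = (c • R) * S` changes column `j` only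
by multiples of `S j j`. -/

open Matrix

namespace ColMod

variable {ι : Type*} [Fintype ι] {S B C : Matrix ι ι ℤ}

theorem of_smul_modulus {c : ℤ} (h : ColMod (c • S) B C) : ColMod S B C :=
  fun i j => (dvd_mul_left (S j j) c).trans (h i j)

theorem of_smul {c : ℤ} (hc : c ≠ 0) (h : ColMod (c • S) (c • B) (c • C)) : ColMod S B C :=
  fun i j => (mul_dvd_mul_iff_left hc).mp (by simpa [mul_sub] using h i j)

theorem add_mul_of_isDiag [DecidableEq ι] (hS : S.IsDiag) (h : ColMod S B C)
    (X : Matrix ι ι ℤ) : ColMod S (B + X * S) C := by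
  intro i j
  have hXS : (X * S) i j = X i j * S j j := by
    conv_lhs => rw [← hS.diagonal_diag]
    exact mul_diagonal _ _ i j
  rw [Matrix.add_apply, hXS, add_sub_right_comm]
  exact dvd_add (h i j) (dvd_mul_left _ _)

end ColMod

namespace IsSmithMassager

variable {ι : Type*} [Fintype ι] [DecidableEq ι] {A S M : Matrix ι ι ℤ}

theorem of_smul {c : ℤ} (hc : c ≠ 0) (h : IsSmithMassager (c • A) (c • S) M) :
    IsSmithMassager A S M := by
  obtain ⟨hAM, W, hWM⟩ := h
  refine ⟨ColMod.of_smul hc ?_, W, hWM.of_smul_modulus⟩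
  rwa [smul_zero, ← smul_mul]

theorem add_mul_of_isDiag (hS : S.IsDiag) (h : IsSmithMassager A S M) (X : Matrix ι ι ℤ) :
    IsSmithMassager A S (M + X * S) := by
  obtain ⟨hAM, W, hWM⟩ := h
  refine ⟨?_, W, ?_⟩
  · rw [Matrix.mul_add, ← Matrix.mul_assoc]
    exact hAM.add_mul_of_isDiag hS _
  · rw [Matrix.mul_add, ← Matrix.mul_assoc]
    exact hWM.add_mul_of_isDiag hS _

end IsSmithMassager

theorem smithMassager_add_rand_mul_smithForm_general {n : ℕ}
    (c : ℤ) (hc : 0 < c) (A S M R : Matrix (Fin n) (Fin n) ℤ)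
    (hS : IsSmithForm A S)
    (hM : IsSmithMassager (c • A) (c • S) M) :
    IsSmithMassager A S (M + R * (c • S)) := by
  rw [Matrix.mul_smul, ← Matrix.smul_mul]
  exact (hM.of_smul hc.ne').add_mul_of_isDiag hS.1 _

/-- If `M` is a Smith massager for `cA` (with Smith form `cS`), then `M + R(cS)`
is a Smith massager for `A`, for any integer matrix `R`. -/
theorem smithMassager_add_rand_mul_smithForm {n : ℕ}
    (c : ℤ) (hc : 0 < c) (A S M R : Matrix (Fin n) (Fin n) ℤ)
    (hA : A.det ≠ 0) (hS : IsSmithForm A S)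
    (hM : IsSmithMassager (c • A) (c • S) M) :
    IsSmithMassager A S (M + R * (c • S)) :=
  smithMassager_add_rand_mul_smithForm_general c hc A S M R hS hM
end

section
/- Let c be a positive integer and let A ∈ ℤ^{n×n} be nonsingular with Smith form S = diag(s_1,…,s_n), so that cS is the Smith form of cA. Let M ∈ ℤ^{n×n} be a Smith massager for cA and let R ∈ ℤ^{n×n} be arbitrary. Then for every 1 ≤ i ≤ n and every prime p dividing c·s_{n-i+1}, the n×i matrix formed by the last i columns of M + R·(cS), reduced modulo p, has rank i over the field ℤ/(p). -/
open Matrix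

/-!
Reducing `W * M ≡ I (colmod cS)` modulo `p` gives `W * M ≡ I` in every column `j ≥ n - i`,
since `p ∣ c s_{n-i+1} ∣ c s_j` there; adding `R (cS)` to `M` only changes column `j` by a
multiple of `c s_j`. So the rows `j ≥ n - i` of `W` form a left inverse mod `p` of the last
`i` columns of `M + R (cS)`, which therefore have rank `i`.
-/

namespace Matrix

theorem rank_submatrix_eq_card_of_mul_submatrix_eq_one {R m ι : Type*} [CommSemiring R]
    [StrongRankCondition R] [Fintype m] [Fintype ι] [DecidableEq ι]
    (W N : Matrix m m R) (f : ι → m) (h : (W * N).submatrix f f = 1) :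
    (N.submatrix id f).rank = Fintype.card ι := by
  have hle := rank_mul_le_right (W.submatrix f id) (N.submatrix id f)
  rw [← submatrix_mul _ _ _ _ _ Function.bijective_id, h, rank_one] at hle
  exact le_antisymm (rank_le_card_width _) hle

end Matrix

namespace ColMod

variable {ι : Type*} [Fintype ι] {S B C : Matrix ι ι ℤ}

theorem add_mul_right (hS : S.IsDiag) (h : ColMod S B C) (X : Matrix ι ι ℤ) :
    ColMod S (B + X * S) C := by
  classical
  intro i j
  have hXS : (X * S) i j = X i j * S j j := by
    conv_lhs => rw [← hS.diagonal_diag]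
    rw [mul_diagonal, diag_apply]
  rw [Matrix.add_apply, hXS, add_sub_right_comm]
  exact dvd_add (h i j) (dvd_mul_left _ _)

theorem intCast_apply_eq (h : ColMod S B C) {p : ℕ} {j : ι} (hp : (p : ℤ) ∣ S j j) (i : ι) :
    (B i j : ZMod p) = C i j :=
  (ZMod.intCast_eq_intCast_iff_dvd_sub _ _ p).mpr (hp.trans (dvd_sub_comm.mp (h i j)))

end ColMod

/-- If `M` is a Smith massager for `cA`, then for every `1 ≤ i ≤ n` and every prime
`p` dividing `c * s_{n-i+1}`, the last `i` columns of `M + R(cS)` have full rank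
`i` over `ℤ/(p)`. -/
theorem lastCols_perturbed_massager_fullRank {n : ℕ}
    (c : ℤ) (A S M R : Matrix (Fin n) (Fin n) ℤ)
    (hS : IsSmithForm A S)
    (hM : IsSmithMassager (c • A) (c • S) M)
    (i : ℕ) (h1 : 1 ≤ i) (h2 : i ≤ n)
    (p : ℕ) (hp : p.Prime)
    (hdvd : (p : ℤ) ∣ c * S ⟨n - i, by omega⟩ ⟨n - i, by omega⟩) :
    (((M + R * (c • S)).map (Int.cast : ℤ → ZMod p)).submatrix id
      (fun k : Fin i => (⟨n - i + k.val, by have := k.isLt; omega⟩ : Fin n))).rank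
      = i := by
  obtain ⟨hSdiag, -, hSchain, -⟩ := hS
  obtain ⟨-, W, hW⟩ := hM
  have : Fact p.Prime := ⟨hp⟩
  set f : Fin i → Fin n := fun k => ⟨n - i + k.val, by have := k.isLt; omega⟩
  have hf : Function.Injective f := fun a b hab => Fin.ext (by simpa [f] using hab)
  have hp_dvd (l : Fin i) : (p : ℤ) ∣ (c • S) (f l) (f l) :=
    hdvd.trans (mul_dvd_mul_left c (hSchain _ _ (by simp [f, Fin.le_def])))
  have hcol : ColMod (c • S) (W * (M + R * (c • S))) 1 := by
    rw [Matrix.mul_add, ← Matrix.mul_assoc]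
    exact hW.add_mul_right (IsDiag.smul c hSdiag) _
  refine (rank_submatrix_eq_card_of_mul_submatrix_eq_one
    (W.map (Int.cast : ℤ → ZMod p)) _ f ?_).trans (Fintype.card_fin i)
  rw [← submatrix_one f hf]
  ext k l
  simpa [Matrix.mul_apply, Matrix.one_apply, apply_ite] using
    hcol.intCast_apply_eq (hp_dvd l) (f k)
end

section
/- Let A ∈ ℤ^{n×n} be nonsingular with Smith form S = diag(s_1,…,s_n), and let M ∈ ℤ^{n×n} be a nonsingular Smith massager for A. Let H ∈ ℤ^{n×n} be the lower triangular row Hermite form of M, with diagonal entries h_1,…,h_n. Then gcd(h_i, s_i) = 1 for every 1 ≤ i ≤ n. -/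
/-!
If a prime `p` divided both `h_i` and `s_i`, it would divide every `s_k` with `k ≥ i`. Writing
`H = U M` with `U` unimodular, the massager condition `W M ≡ I (colmod S)` gives
`(W U⁻¹) H ≡ I` modulo `p` on the columns `k ≥ i`. As `H` is lower triangular, the trailing
`k ≥ i` block of `(W U⁻¹) H` is the product of the trailing blocks of `W U⁻¹` and of `H`; the
latter is lower triangular with the diagonal entry `h_i ≡ 0 (mod p)`, so its determinant
vanishes in `ZMod p`, whereas the product is the identity.
-/

open Matrix

/-- `H` is the lower triangular row Hermite form of `B`: lower triangular with
positive diagonal entries, off-diagonal entries in column `j` reduced into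
`[0, H j j)`, and `H = U * B` for some unimodular `U`. -/
def IsLowerHermiteFormOf {n : ℕ} (H B : Matrix (Fin n) (Fin n) ℤ) : Prop :=
  (∀ i j : Fin n, i < j → H i j = 0) ∧ (∀ j, 0 < H j j) ∧
  (∀ i j : Fin n, j < i → 0 ≤ H i j ∧ H i j < H j j) ∧
  ∃ U : Matrix (Fin n) (Fin n) ℤ, IsUnimodular U ∧ H = U * B

namespace Matrix

variable {ι R : Type*} [Fintype ι] [LinearOrder ι] [CommRing R]

theorem toBlock_Ici_mul_of_isLowerTriangular (V H : Matrix ι ι R) (hH : H.IsLowerTriangular)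
    (i : ι) :
    (V * H).toBlock (i ≤ ·) (i ≤ ·) = V.toBlock (i ≤ ·) (i ≤ ·) * H.toBlock (i ≤ ·) (i ≤ ·) := by
  have hblock : H.toBlock (¬i ≤ ·) (i ≤ ·) = 0 := by
    ext ⟨m, hm⟩ ⟨k, hk⟩
    exact hH (OrderDual.toDual_lt_toDual.2 ((not_le.1 hm).trans_le hk))
  rw [toBlock_mul_eq_add _ (i ≤ ·), hblock, Matrix.mul_zero, add_zero]

theorem det_toBlock_Ici_eq_zero_of_isLowerTriangular [DecidableEq ι] {H : Matrix ι ι R}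
    (hH : H.IsLowerTriangular) {i : ι} (hi : H i i = 0) :
    (H.toBlock (i ≤ ·) (i ≤ ·)).det = 0 := by
  rw [det_of_isLowerTriangular (H.toBlock _ _) fun _ _ h => hH h]
  exact Finset.prod_eq_zero (Finset.mem_univ (⟨i, le_rfl⟩ : {k // i ≤ k})) hi

theorem toBlock_Ici_mul_ne_one_of_isLowerTriangular [DecidableEq ι] [Nontrivial R]
    (V : Matrix ι ι R) {H : Matrix ι ι R} (hH : H.IsLowerTriangular) {i : ι} (hi : H i i = 0) :
    (V * H).toBlock (i ≤ ·) (i ≤ ·) ≠ 1 := by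
  intro h
  have := congrArg det h
  rw [toBlock_Ici_mul_of_isLowerTriangular V H hH, det_mul,
    det_toBlock_Ici_eq_zero_of_isLowerTriangular hH hi, mul_zero, det_one] at this
  exact zero_ne_one this

end Matrix

theorem ColMod.exists_mul_unimodular_mul {ι : Type*} [Fintype ι] [DecidableEq ι]
    {S W M U : Matrix ι ι ℤ} (hWM : ColMod S (W * M) 1) (hU : IsUnimodular U) :
    ∃ V, ColMod S (V * (U * M)) 1 :=
  ⟨W * U⁻¹, by
    rwa [Matrix.mul_assoc, ← Matrix.mul_assoc U⁻¹, U.nonsing_inv_mul hU.isUnit_det,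
      Matrix.one_mul]⟩

theorem ColMod.toBlock_map_intCast_eq_one {ι : Type*} [Fintype ι] [DecidableEq ι]
    {S B : Matrix ι ι ℤ} (hB : ColMod S B 1) {p : ℕ} (q : ι → Prop)
    (hp : ∀ k, q k → (p : ℤ) ∣ S k k) :
    (B.map (Int.castRingHom (ZMod p))).toBlock q q = 1 := by
  rw [← toBlock_one_self q, ← Matrix.map_one _ (map_zero (Int.castRingHom (ZMod p))) (map_one _)]
  ext ⟨j, -⟩ ⟨k, hk⟩
  simp only [toBlock_apply, map_apply, eq_intCast]
  exact ((ZMod.intCast_eq_intCast_iff_dvd_sub _ _ p).2 ((hp k hk).trans (hB j k))).symm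

theorem hermite_diag_coprime_invariantFactors_general {n : ℕ}
    (A S M : Matrix (Fin n) (Fin n) ℤ)
    (hS : IsSmithForm A S) (hM : IsSmithMassager A S M)
    (H : Matrix (Fin n) (Fin n) ℤ) (hH : IsLowerHermiteFormOf H M) :
    ∀ i : Fin n, Int.gcd (H i i) (S i i) = 1 := by
  obtain ⟨-, -, hSdvd, -⟩ := hS
  obtain ⟨-, W, hWM⟩ := hM
  obtain ⟨hHtri, -, -, U, hU, rfl⟩ := hH
  intro i
  by_contra hgcd
  obtain ⟨p, hp, hpgcd⟩ := Nat.exists_prime_and_dvd hgcd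
  have := Fact.mk hp
  replace hpgcd := Int.natCast_dvd_natCast.2 hpgcd
  have hpH : (p : ℤ) ∣ (U * M) i i := hpgcd.trans (Int.gcd_dvd_left _ _)
  have hpS : ∀ k, i ≤ k → (p : ℤ) ∣ S k k := fun k hk =>
    (hpgcd.trans (Int.gcd_dvd_right _ _)).trans (hSdvd i k hk)
  obtain ⟨V, hV⟩ := hWM.exists_mul_unimodular_mul hU
  have hlower : ((U * M).map (Int.castRingHom (ZMod p))).IsLowerTriangular :=
    BlockTriangular.map _ (fun _ _ h => hHtri _ _ h)
  refine (V.map (Int.castRingHom (ZMod p))).toBlock_Ici_mul_ne_one_of_isLowerTriangular hlower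
    ((ZMod.intCast_zmod_eq_zero_iff_dvd _ p).2 hpH) ?_
  rw [← Matrix.map_mul]
  exact hV.toBlock_map_intCast_eq_one _ hpS

/-- The diagonal entries of the lower triangular row Hermite form of a nonsingular
Smith massager are relatively prime to the corresponding invariant factors. -/
theorem hermite_diag_coprime_invariantFactors {n : ℕ}
    (A S M : Matrix (Fin n) (Fin n) ℤ) (hA : A.det ≠ 0)
    (hS : IsSmithForm A S) (hM : IsSmithMassager A S M) (hMns : M.det ≠ 0)
    (H : Matrix (Fin n) (Fin n) ℤ) (hH : IsLowerHermiteFormOf H M) :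
    ∀ i : Fin n, Int.gcd (H i i) (S i i) = 1 :=
  hermite_diag_coprime_invariantFactors_general A S M hS hM H hH
end

section
/- Let A ∈ ℤ^{n×n} be nonsingular with Smith form S = diag(s_1,…,s_n), let M ∈ ℤ^{n×n} be a nonsingular Smith massager for A, and let H ∈ ℤ^{n×n} be the lower triangular row Hermite form of M. Then the matrix M·H^{-1} has integer entries, is unimodular, and is a Smith massager for A. -/
/-!
Write `H = U * M` with `U` unimodular and put `V = U⁻¹`, so that `M * H⁻¹ = V` is an integral
unimodular matrix with `M = V * H`. If `W * M ≡ I (colmod S)`, then for every `j` the trailing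
principal blocks (indices `≥ j`) satisfy `(W * V)' * H' ≡ I` modulo `s_j`, because `H` is lower
triangular and `s_j ∣ s_k` for `k ≥ j`. Taking determinants, `s_j` is coprime to
`det H' = ∏_{k ≥ j} h_k`, hence to `h_j`. Column `j` of `A * M = (A * V) * H` is
`∑_{k ≥ j} (A * V)_{·k} h_{kj}`; by descending induction on `j` every term with `k > j` is
divisible by `s_k`, hence by `s_j`, so `s_j ∣ (A * V)_{·j} h_j` and coprimality cancels `h_j`.
-/

open Matrix

theorem isUnimodular_iff_isUnit_det {ι : Type*} [Fintype ι] [DecidableEq ι]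
    (U : Matrix ι ι ℤ) : IsUnimodular U ↔ IsUnit U.det :=
  Int.isUnit_iff.symm

theorem colMod_zero_iff {ι : Type*} [Fintype ι] (S B : Matrix ι ι ℤ) :
    ColMod S B 0 ↔ ∀ i j, S j j ∣ B i j := by
  simp only [ColMod, Matrix.zero_apply, sub_zero]

theorem Matrix.dvd_det_sub_det {R ι : Type*} [CommRing R] [Fintype ι] [DecidableEq ι] {s : R}
    {A B : Matrix ι ι R} (h : ∀ i j, s ∣ A i j - B i j) : s ∣ A.det - B.det := by
  let f := Ideal.Quotient.mk (Ideal.span {s})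
  have hAB : f.mapMatrix A = f.mapMatrix B := by
    ext i j
    exact Ideal.Quotient.eq.mpr (Ideal.mem_span_singleton.mpr (h i j))
  rw [← Ideal.mem_span_singleton, ← Ideal.Quotient.eq, RingHom.map_det, RingHom.map_det, hAB]

section LowerTriangular

variable {ι : Type*} [Fintype ι] [LinearOrder ι] {S H : Matrix ι ι ℤ}

theorem isCoprime_diag_of_colMod_mul_one (hS : ∀ j k, j ≤ k → S j j ∣ S k k)
    (hH : H.IsLowerTriangular) {G : Matrix ι ι ℤ} (hGH : ColMod S (G * H) 1) (j : ι) :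
    IsCoprime (S j j) (H j j) := by
  let p : ι → Prop := (j ≤ ·)
  have hHblock : H.toBlock (fun i => ¬p i) p = 0 := by
    ext i k
    exact hH (OrderDual.toDual_lt_toDual.mpr ((not_le.mp i.2).trans_le k.2))
  have hblock : (G * H).toBlock p p = G.toBlock p p * H.toBlock p p := by
    rw [toBlock_mul_eq_add p p, hHblock, Matrix.mul_zero, add_zero]
  have hHdet : (H.toBlock p p).det = ∏ k : {k // p k}, H k k :=
    det_of_isLowerTriangular _ fun _ _ hik => hH hik
  have hcong :
      S j j ∣ ((G * H).toBlock p p).det - (1 : Matrix {k // p k} {k // p k} ℤ).det := by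
    refine dvd_det_sub_det fun i k => (hS j k k.2).trans ?_
    simpa [← toBlock_one_self p] using hGH i k
  rw [hblock, det_mul, hHdet, det_one] at hcong
  have hcop := IsCoprime.add_one_right_of_dvd hcong
  rw [sub_add_cancel] at hcop
  exact hcop.of_isCoprime_of_dvd_right
    (Dvd.dvd.mul_left (Finset.dvd_prod_of_mem _ (Finset.mem_univ (⟨j, le_rfl⟩ : {k // p k}))) _)

theorem colMod_zero_of_colMod_mul_zero (hS : ∀ j k, j ≤ k → S j j ∣ S k k)
    (hH : H.IsLowerTriangular) (hcop : ∀ j, IsCoprime (S j j) (H j j)) {X : Matrix ι ι ℤ}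
    (hXH : ColMod S (X * H) 0) : ColMod S X 0 := by
  rw [colMod_zero_iff] at hXH ⊢
  intro i j
  induction j using WellFoundedGT.induction with
  | _ j ih =>
    have hrest : S j j ∣ ∑ k ∈ Finset.univ.erase j, X i k * H k j := by
      refine Finset.dvd_sum fun k hk => ?_
      rcases lt_or_gt_of_ne (Finset.ne_of_mem_erase hk) with hkj | hjk
      · rw [hH hkj, mul_zero]
        exact dvd_zero _
      · exact ((hS j k hjk.le).trans (ih k hjk)).mul_right _
    have hdiag : S j j ∣ X i j * H j j := by
      have h := dvd_sub (hXH i j) hrest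
      rwa [mul_apply, ← Finset.add_sum_erase _ _ (Finset.mem_univ j), add_sub_cancel_right] at h
    exact (hcop j).dvd_of_dvd_mul_right hdiag

theorem IsSmithMassager.of_mul_lowerTriangular {A V : Matrix ι ι ℤ}
    (hS : ∀ j k, j ≤ k → S j j ∣ S k k) (hH : H.IsLowerTriangular) (hV : IsUnit V.det)
    (hM : IsSmithMassager A S (V * H)) : IsSmithMassager A S V := by
  obtain ⟨hAM, W, hWM⟩ := hM
  rw [← Matrix.mul_assoc] at hAM hWM
  have hcop := isCoprime_diag_of_colMod_mul_one hS hH hWM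
  refine ⟨colMod_zero_of_colMod_mul_zero hS hH hcop hAM, V⁻¹, ?_⟩
  rw [nonsing_inv_mul V hV]
  simp [ColMod]

end LowerTriangular

theorem massager_mul_inv_hermite_unimodular_massager_general {n : ℕ}
    (A S M : Matrix (Fin n) (Fin n) ℤ)
    (hS : IsSmithForm A S) (hM : IsSmithMassager A S M) (hMns : M.det ≠ 0)
    (H : Matrix (Fin n) (Fin n) ℤ) (hH : IsLowerHermiteFormOf H M) :
    ∃ V : Matrix (Fin n) (Fin n) ℤ,
      V.map (Int.cast : ℤ → ℚ) =
        M.map (Int.cast : ℤ → ℚ) * (H.map (Int.cast : ℤ → ℚ))⁻¹ ∧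
      IsUnimodular V ∧ IsSmithMassager A S V := by
  obtain ⟨hHlow, -, -, U, hU, hHUM⟩ := hH
  rw [isUnimodular_iff_isUnit_det] at hU
  have hVH : U⁻¹ * H = M := by
    rw [hHUM, ← Matrix.mul_assoc, nonsing_inv_mul U hU, Matrix.one_mul]
  have hHdet : IsUnit (H.map (Int.cast : ℤ → ℚ)).det := by
    rw [← Int.cast_det, isUnit_iff_ne_zero, Int.cast_ne_zero, hHUM, det_mul]
    exact mul_ne_zero hU.ne_zero hMns
  refine ⟨U⁻¹, ?_, (isUnimodular_iff_isUnit_det _).mpr (isUnit_nonsing_inv_det U hU),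
    IsSmithMassager.of_mul_lowerTriangular hS.2.2.1 (fun i j h => hHlow i j h)
      (isUnit_nonsing_inv_det U hU) (by rwa [hVH])⟩
  have hcast : (U⁻¹ * H).map (Int.cast : ℤ → ℚ) = U⁻¹.map Int.cast * H.map Int.cast :=
    Matrix.map_mul (f := Int.castRingHom ℚ)
  rw [← hVH, hcast, Matrix.mul_assoc, mul_nonsing_inv _ hHdet, Matrix.mul_one]

/-- A nonsingular Smith massager `M` for `A`, postmultiplied by the inverse of its
lower triangular row Hermite form, is an integral, unimodular Smith massager for `A`. -/
theorem massager_mul_inv_hermite_unimodular_massager {n : ℕ}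
    (A S M : Matrix (Fin n) (Fin n) ℤ) (hA : A.det ≠ 0)
    (hS : IsSmithForm A S) (hM : IsSmithMassager A S M) (hMns : M.det ≠ 0)
    (H : Matrix (Fin n) (Fin n) ℤ) (hH : IsLowerHermiteFormOf H M) :
    ∃ V : Matrix (Fin n) (Fin n) ℤ,
      V.map (Int.cast : ℤ → ℚ) =
        M.map (Int.cast : ℤ → ℚ) * (H.map (Int.cast : ℤ → ℚ))⁻¹ ∧
      IsUnimodular V ∧ IsSmithMassager A S V :=
  massager_mul_inv_hermite_unimodular_massager_general A S M hS hM hMns H hH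
end

section
/- Let m ≥ 1 and let ℓ_1,…,ℓ_m be positive integers. Set d = ⌈(ℓ_1 + ⋯ + ℓ_m)/m⌉, and for each i let e_i be the minimal nonnegative integer such that ℓ_i ≤ (e_i + 1)·d. Then e_1 + ⋯ + e_m < m. -/
open Finset

theorem Nat.mul_lt_of_forall_le_succ_mul {ℓ d e : ℕ} (hℓ : 0 < ℓ)
    (hmin : ∀ e' : ℕ, ℓ ≤ (e' + 1) * d → e ≤ e') : e * d < ℓ := by
  cases e with
  | zero => simpa using hℓ
  | succ k =>
    by_contra! hle
    exact absurd (hmin k hle) (Nat.not_succ_le_self k)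

theorem Nat.le_mul_of_intCast_eq_ceil_div {K : Type*} [Field K] [LinearOrder K]
    [IsStrictOrderedRing K] [FloorRing K] {n m d : ℕ} (hm : 0 < m)
    (hd : (d : ℤ) = ⌈(n : K) / m⌉) : n ≤ m * d := by
  have hdiv : (n : K) / m ≤ d := by exact_mod_cast hd ▸ Int.le_ceil ((n : K) / m)
  rw [div_le_iff₀ (by exact_mod_cast hm), mul_comm] at hdiv
  exact_mod_cast hdiv

/-- If `d` is the ceiling of the average of the positive integers `ℓ 1, …, ℓ m`, and
each `e i` is minimal with `ℓ i ≤ (e i + 1) * d`, then `e 1 + ⋯ + e m < m`. -/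
theorem sum_linearization_exponents_lt {m : ℕ} (hm : 1 ≤ m)
    (ℓ : Fin m → ℕ) (hℓ : ∀ i, 0 < ℓ i)
    (d : ℕ) (hd : (d : ℤ) = ⌈((∑ i, ℓ i : ℕ) : ℚ) / (m : ℚ)⌉)
    (e : Fin m → ℕ)
    (he : ∀ i, ℓ i ≤ (e i + 1) * d ∧ ∀ e' : ℕ, ℓ i ≤ (e' + 1) * d → e i ≤ e') :
    ∑ i, e i < m := by
  have : Nonempty (Fin m) := ⟨⟨0, hm⟩⟩
  refine Nat.lt_of_mul_lt_mul_right (a := d) ?_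
  calc (∑ i, e i) * d = ∑ i, e i * d := sum_mul ..
    _ < ∑ i, ℓ i := sum_lt_sum_of_nonempty univ_nonempty fun i _ ↦
        Nat.mul_lt_of_forall_le_succ_mul (hℓ i) (he i).2
    _ ≤ m * d := Nat.le_mul_of_intCast_eq_ceil_div hm hd
end

section
/- Let A ∈ ℤ^{n×n} be nonsingular with Smith form S ∈ ℤ^{n×n}, let k ≥ 0, and set n̄ = n + k. Suppose D ∈ ℤ^{n̄×n̄} admits a factorization D = [[I_n, Q],[0, I_k]] · [[A, 0],[0, I_k]] · [[I_n, 0],[E, F]] for some Q ∈ ℤ^{n×k}, E ∈ ℤ^{k×n}, and F ∈ ℤ^{k×k} lower triangular with all diagonal entries equal to 1 (blocks written in n,k row/column order). Suppose further that the block diagonal matrix diag(I_k, S) ∈ ℤ^{n̄×n̄} is the Smith form of D, and that the matrix [[0, M_1],[0, M_2]] ∈ ℤ^{n̄×n̄} (where the zero blocks have k columns, M_1 ∈ ℤ^{n×n} and M_2 ∈ ℤ^{k×n}) is a Smith massager for D. Then M_1 is a Smith massager for A. -/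
open Matrix

/-!
With `N = F M₂ + E M₁`, the product of `D` with `M̄ = fromBlocks 0 M₂ 0 M₁` is
`fromBlocks 0 N 0 (Q N + A M₁)`, so `D M̄ ≡ 0` gives `N ≡ 0` and then `A M₁ ≡ 0 (colmod S)`.
Since `F` is unitriangular it is invertible over `ℤ`, and a witness `W̄` with `W̄ M̄ ≡ I`
yields the witness `W₂₂ - W₂₁ F⁻¹ E` for `M₁`: its product with `M₁` is the lower right
block of `W̄ M̄` minus `W₂₁ F⁻¹ N`.
-/

theorem Matrix.dvd_mul_apply_of_forall_dvd {m l n R : Type*} [Fintype l] [CommSemiring R]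
    (C : Matrix m l R) {B : Matrix l n R} {d : R} {j : n} (h : ∀ x, d ∣ B x j) (i : m) :
    d ∣ (C * B) i j :=
  Finset.dvd_sum fun x _ => (h x).mul_left _

theorem Matrix.IsLowerTriangular.isUnit_det_of_diag_eq_one {k R : Type*} [LinearOrder k]
    [Fintype k] [DecidableEq k] [CommRing R] {F : Matrix k k R} (hF : F.IsLowerTriangular)
    (hdiag : ∀ i, F i i = 1) : IsUnit F.det := by
  simp [det_of_isLowerTriangular F hF, hdiag]

theorem Matrix.fromBlocks_partialLinearization_mul {k n R : Type*} [Fintype k] [Fintype n]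
    [DecidableEq k] [DecidableEq n] [CommRing R] (A M₁ : Matrix n n R) (Q : Matrix n k R)
    (E M₂ : Matrix k n R) (F : Matrix k k R) :
    (fromBlocks 1 0 Q 1 * fromBlocks 1 0 0 A * fromBlocks F E 0 1 * fromBlocks 0 M₂ 0 M₁ :
        Matrix (k ⊕ n) (k ⊕ n) R) =
      fromBlocks 0 (F * M₂ + E * M₁) 0 (Q * (F * M₂ + E * M₁) + A * M₁) := by
  simp only [fromBlocks_multiply, Matrix.mul_add, Matrix.add_mul, Matrix.mul_assoc, Matrix.one_mul,
    Matrix.mul_one, Matrix.zero_mul, Matrix.mul_zero, add_zero, zero_add]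
  abel_nf

theorem Matrix.sub_mul_inv_mul_mul_eq {k n R : Type*} [Fintype k] [Fintype n]
    [DecidableEq k] [CommRing R] {F : Matrix k k R} (hF : IsUnit F.det) (E M₂ : Matrix k n R)
    (M₁ W₂₂ : Matrix n n R) (W₂₁ : Matrix n k R) :
    (W₂₂ - W₂₁ * F⁻¹ * E) * M₁ = W₂₁ * M₂ + W₂₂ * M₁ - W₂₁ * F⁻¹ * (F * M₂ + E * M₁) := by
  simp only [Matrix.mul_add, Matrix.sub_mul, Matrix.mul_assoc, nonsing_inv_mul_cancel_left F _ hF]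
  abel

namespace ColMod

variable {ι : Type*} [Fintype ι] {S B C : Matrix ι ι ℤ}

theorem sub_mul_of_forall_dvd {κ : Type*} [Fintype κ] (h : ColMod S B C) (K : Matrix ι κ ℤ)
    {N : Matrix κ ι ℤ} (hN : ∀ x j, S j j ∣ N x j) : ColMod S (B - K * N) C := fun i j => by
  simpa [sub_right_comm] using dvd_sub (h i j) (dvd_mul_apply_of_forall_dvd K (hN · j) i)

theorem of_fromBlocks {κ : Type*} [Fintype κ] {P₁₁ B₁₁ C₁₁ : Matrix κ κ ℤ}
    {P₁₂ B₁₂ C₁₂ : Matrix κ ι ℤ} {P₂₁ B₂₁ C₂₁ : Matrix ι κ ℤ}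
    (h : ColMod (fromBlocks P₁₁ P₁₂ P₂₁ S) (fromBlocks B₁₁ B₁₂ B₂₁ B) (fromBlocks C₁₁ C₁₂ C₂₁ C)) :
    (∀ i j, S j j ∣ B₁₂ i j - C₁₂ i j) ∧ ColMod S B C :=
  ⟨fun i j => h (.inl i) (.inr j), fun i j => h (.inr i) (.inr j)⟩

end ColMod

theorem smithMassager_of_partialLinearization_general {n k : ℕ}
    (A S : Matrix (Fin n) (Fin n) ℤ)
    (Q : Matrix (Fin n) (Fin k) ℤ) (E : Matrix (Fin k) (Fin n) ℤ)
    (F : Matrix (Fin k) (Fin k) ℤ)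
    (hFdiag : ∀ i, F i i = 1) (hFlow : ∀ i j : Fin k, i < j → F i j = 0)
    (D : Matrix (Fin k ⊕ Fin n) (Fin k ⊕ Fin n) ℤ)
    (hD : D = Matrix.fromBlocks 1 0 Q 1 * Matrix.fromBlocks 1 0 0 A *
      Matrix.fromBlocks F E 0 1)
    (M₁ : Matrix (Fin n) (Fin n) ℤ) (M₂ : Matrix (Fin k) (Fin n) ℤ)
    (hM : IsSmithMassager D (Matrix.fromBlocks 1 0 0 S)
      (Matrix.fromBlocks 0 M₂ 0 M₁)) :
    IsSmithMassager A S M₁ := by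
  obtain ⟨hDM, W, hWM⟩ := hM
  rw [hD, fromBlocks_partialLinearization_mul, ← fromBlocks_zero] at hDM
  obtain ⟨hN, hQNAM⟩ := hDM.of_fromBlocks
  simp only [Matrix.zero_apply, sub_zero] at hN
  rw [← fromBlocks_toBlocks W, fromBlocks_multiply, ← fromBlocks_one] at hWM
  obtain ⟨-, hW⟩ := hWM.of_fromBlocks
  refine ⟨by simpa using hQNAM.sub_mul_of_forall_dvd Q hN,
    W.toBlocks₂₂ - W.toBlocks₂₁ * F⁻¹ * E, ?_⟩
  have hF : IsUnit F.det :=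
    IsLowerTriangular.isUnit_det_of_diag_eq_one (fun i j h => hFlow i j h) hFdiag
  rw [sub_mul_inv_mul_mul_eq hF]
  simpa using hW.sub_mul_of_forall_dvd (W.toBlocks₂₁ * F⁻¹) hN

/-- If `D` is a partial linearization of `A` (admitting the block factorization
below), `diag(I_k, S)` is the Smith form of `D`, and `[[0, M₁],[0, M₂]]` is a Smith
massager for `D`, then `M₁` is a Smith massager for `A`. -/
theorem smithMassager_of_partialLinearization {n k : ℕ}
    (A S : Matrix (Fin n) (Fin n) ℤ) (hA : A.det ≠ 0) (hS : IsSmithForm A S)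
    (Q : Matrix (Fin n) (Fin k) ℤ) (E : Matrix (Fin k) (Fin n) ℤ)
    (F : Matrix (Fin k) (Fin k) ℤ)
    (hFdiag : ∀ i, F i i = 1) (hFlow : ∀ i j : Fin k, i < j → F i j = 0)
    (D : Matrix (Fin k ⊕ Fin n) (Fin k ⊕ Fin n) ℤ)
    (hD : D = Matrix.fromBlocks 1 0 Q 1 * Matrix.fromBlocks 1 0 0 A *
      Matrix.fromBlocks F E 0 1)
    (hSD : ∃ P Q₂ : Matrix (Fin k ⊕ Fin n) (Fin k ⊕ Fin n) ℤ,
      IsUnimodular P ∧ IsUnimodular Q₂ ∧ P * D * Q₂ = Matrix.fromBlocks 1 0 0 S)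
    (M₁ : Matrix (Fin n) (Fin n) ℤ) (M₂ : Matrix (Fin k) (Fin n) ℤ)
    (hM : IsSmithMassager D (Matrix.fromBlocks 1 0 0 S)
      (Matrix.fromBlocks 0 M₂ 0 M₁)) :
    IsSmithMassager A S M₁ :=
  smithMassager_of_partialLinearization_general A S Q E F hFdiag hFlow D hD M₁ M₂ hM
end

section
/- Let A ∈ ℤ^{n×n} be nonsingular with Smith form S = diag(s_1,…,s_n), let s = s_n, and let U, V ∈ ℤ^{n×n} be unimodular matrices with AV = US. Define V̄ ∈ ℤ^{n×n} as the matrix whose (i,j) entry is the remainder of V_{ij} modulo s_j (in [0, s_j)), and Ū ∈ ℤ^{n×n} as the matrix whose (i,j) entry is the remainder of the (i,j) entry of U^{-1} modulo s_i (in [0, s_i)). Then s·A^{-1} is an integer matrix and s·A^{-1} ≡ V̄ · (s·S^{-1}) · Ū (mod s) entrywise; that is, (V̄, S, Ū) is an outer product adjoint formula for A. -/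
open Matrix

/-! With `D = diag(s/s_j)` we have `S·D = s·I`, so `C := V·D·U⁻¹` satisfies
`A·C = U·S·D·U⁻¹ = s·I`, i.e. `C = s·A⁻¹` is integral. Replacing `V` by `V̄` changes entry
`V_ik` by a multiple of `s_k`, and replacing `U⁻¹` by `Ū` changes entry `U⁻¹_kj` by a multiple of
`s_k`; in the term `V_ik·(s/s_k)·U⁻¹_kj` either change is a multiple of `s_k·(s/s_k) = s`. -/

theorem dvd_mul_mul_sub_mul_mul {R : Type*} [CommRing R] {d e s a a' b b' : R}
    (hde : d * e = s) (ha : d ∣ a - a') (hb : d ∣ b - b') :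
    s ∣ a * e * b - a' * e * b' := by
  have key : a * e * b - a' * e * b' = (a - a') * e * b + a' * ((b - b') * e) := by ring
  rw [key, ← hde]
  exact dvd_add (dvd_mul_of_dvd_left (mul_dvd_mul_right ha e) b)
    (dvd_mul_of_dvd_right (mul_dvd_mul_right hb e) a')

namespace Matrix

variable {ι R : Type*} [Fintype ι] [DecidableEq ι] [CommRing R]

theorem dvd_mul_diagonal_mul_sub_mul_diagonal_mul {d e : ι → R} {s : R}
    (hde : ∀ k, d k * e k = s) {V V' W W' : Matrix ι ι R}
    (hV : ∀ i k, d k ∣ V i k - V' i k) (hW : ∀ k j, d k ∣ W k j - W' k j) (i j : ι) :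
    s ∣ (V * diagonal e * W) i j - (V' * diagonal e * W') i j := by
  rw [mul_apply, mul_apply, ← Finset.sum_sub_distrib]
  simp only [mul_diagonal]
  exact Finset.dvd_sum fun k _ => dvd_mul_mul_sub_mul_mul (hde k) (hV i k) (hW k j)

theorem mul_mul_diagonal_mul_eq_smul_one {A U V Ui : Matrix ι ι R} {d e : ι → R} {s : R}
    (hAV : A * V = U * diagonal d) (hUi : U * Ui = 1) (hde : ∀ k, d k * e k = s) :
    A * (V * diagonal e * Ui) = s • 1 := by
  rw [← Matrix.mul_assoc, ← Matrix.mul_assoc, hAV, Matrix.mul_assoc U, diagonal_mul_diagonal]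
  simp only [hde, ← smul_one_eq_diagonal, Matrix.mul_smul, Matrix.mul_one, Matrix.smul_mul, hUi]

theorem eq_smul_inv_of_mul_eq_smul_one {A C : Matrix ι ι R} {s : R} (hA : IsUnit A.det)
    (h : A * C = s • 1) : C = s • A⁻¹ := by
  calc C = A⁻¹ * (A * C) := by rw [← Matrix.mul_assoc, nonsing_inv_mul _ hA, Matrix.one_mul]
    _ = s • A⁻¹ := by rw [h, Matrix.mul_smul, Matrix.mul_one]

end Matrix

namespace IsSmithForm

variable {n : ℕ} {A S : Matrix (Fin n) (Fin n) ℤ}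

theorem isDiag (hS : IsSmithForm A S) : S.IsDiag := fun i j h => hS.1 i j h

theorem dvd_last (hS : IsSmithForm A S) {last : Fin n} (hlast : (last : ℕ) = n - 1)
    (i : Fin n) : S i i ∣ S last last :=
  hS.2.2.1 i last (Fin.le_def.mpr (by omega))

end IsSmithForm

/-- If `AV = US` with `U, V` unimodular, then `(V colmod S, S, U⁻¹ rowmod S)` is an
outer product adjoint formula for `A`: `s·A⁻¹` is integral and
`s·A⁻¹ ≡ V̄·(s·S⁻¹)·Ū (mod s)` entrywise, where `s = s_n`. -/
theorem outer_product_adjoint_formula {n : ℕ} (hn : 0 < n)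
    (A S U V : Matrix (Fin n) (Fin n) ℤ) (hA : A.det ≠ 0)
    (hS : IsSmithForm A S)
    (hAV : A * V = U * S)
    (Ui : Matrix (Fin n) (Fin n) ℤ) (hUi : U * Ui = 1)
    (s : ℤ) (hs : s = S ⟨n - 1, by omega⟩ ⟨n - 1, by omega⟩)
    (Vbar Ubar : Matrix (Fin n) (Fin n) ℤ)
    (hVbar : ∀ i j, Vbar i j = V i j % S j j)
    (hUbar : ∀ i j, Ubar i j = Ui i j % S i i) :
    ∃ C : Matrix (Fin n) (Fin n) ℤ,
      C.map (Int.cast : ℤ → ℚ) = (s : ℚ) • (A.map (Int.cast : ℤ → ℚ))⁻¹ ∧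
      ∀ i j, C i j % s =
        ((Vbar * Matrix.diagonal (fun j => s / S j j) * Ubar) i j) % s := by
  set e : Fin n → ℤ := fun j => s / S j j
  have hSe : ∀ j, S j j * e j = s := fun j => Int.mul_ediv_cancel' (hs ▸ hS.dvd_last rfl j)
  have hAC : A * (V * diagonal e * Ui) = s • 1 := by
    rw [← hS.isDiag.diagonal_diag] at hAV
    exact mul_mul_diagonal_mul_eq_smul_one hAV hUi hSe
  refine ⟨V * diagonal e * Ui, ?_, fun i j => ?_⟩
  · refine eq_smul_inv_of_mul_eq_smul_one ?_ ?_
    · rw [← Int.cast_det, isUnit_iff_ne_zero]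
      exact_mod_cast hA
    · have h := congrArg (Int.castRingHom ℚ).mapMatrix hAC
      rwa [map_mul, map_zsmul, map_one, ← Int.cast_smul_eq_zsmul ℚ] at h
  · refine (Int.modEq_iff_dvd.mpr ?_).symm
    refine dvd_mul_diagonal_mul_sub_mul_diagonal_mul hSe (fun i k => ?_) (fun k j => ?_) i j
    · rw [hVbar]; exact (Int.mod_modEq _ _).dvd
    · rw [hUbar]; exact (Int.mod_modEq _ _).dvd
end
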